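/- arXiv:2605.09076 — 7 statements merged into one kernel-verified Lean document; each statement's English description precedes it below -/
import Mathlib

section
/- If G is an r-robust undirected graph and G' is a directed graph on the same vertex set obtained by orienting all edges of G in both directions and then removing at most k incoming edges at each vertex, then G' is (r−k)-robust (where r-reachability for a directed graph uses in-neighbors: S is r-reachable if some vertex in S has at least r in-neighbors outside S). -/
open Finset

variable {V : Type*}

/-- For a directed graph given by an adjacency relation `A` (where `A j i` means there is
an edge from `j` to `i`), a nonempty set `S` is `r`-reachable if some vertex in `S` has at
least `r` in-neighbors outside `S`. -/
def dReachable [Fintype V] [DecidableEq V] (A : V → V → Prop) [DecidableRel A]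
    (r : ℕ) (S : Finset V) : Prop :=
  ∃ i ∈ S, r ≤ (univ.filter (fun j => A j i ∧ j ∉ S)).card

/-- A directed graph is `r`-robust if for every pair of nonempty disjoint vertex subsets,
at least one of them is `r`-reachable (via in-neighbors). -/
def dRobust [Fintype V] [DecidableEq V] (A : V → V → Prop) [DecidableRel A]
    (r : ℕ) : Prop :=
  ∀ S₁ S₂ : Finset V, S₁.Nonempty → S₂.Nonempty → Disjoint S₁ S₂ →
    dReachable A r S₁ ∨ dReachable A r S₂

lemma key_aux [Fintype V] [DecidableEq V] (G : SimpleGraph V) [DecidableRel G.Adj]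
    (r k : ℕ) (A : V → V → Prop) [DecidableRel A]
    (hrem : ∀ i : V, (univ.filter (fun j => G.Adj j i ∧ ¬ A j i)).card ≤ k)
    (S : Finset V) (i : V) (hi : r ≤ (G.neighborFinset i \ S).card) :
    r - k ≤ (univ.filter (fun j => A j i ∧ j ∉ S)).card := by
  have hsub : G.neighborFinset i \ S ⊆
      (univ.filter (fun j => A j i ∧ j ∉ S)) ∪
      (univ.filter (fun j => G.Adj j i ∧ ¬ A j i)) := by
    intro j hj
    simp only [mem_sdiff, SimpleGraph.mem_neighborFinset] at hj
    by_cases h : A j i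
    · exact mem_union_left _ (by simp [h, hj.2])
    · exact mem_union_right _ (by simp [h, hj.1.symm])
  have := (card_le_card hsub).trans (card_union_le _ _)
  have h2 := hrem i
  omega

/-- If G is r-robust (undirected) and G' is a directed graph obtained by orienting all
edges of G in both directions and removing at most k incoming edges at each vertex,
then G' is (r−k)-robust. -/
theorem stmt_4 [Fintype V] [DecidableEq V] (G : SimpleGraph V) [DecidableRel G.Adj]
    (r k : ℕ)
    (hG : ∀ S₁ S₂ : Finset V, S₁.Nonempty → S₂.Nonempty → Disjoint S₁ S₂ →
      (∃ i ∈ S₁, r ≤ (G.neighborFinset i \ S₁).card) ∨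
      (∃ i ∈ S₂, r ≤ (G.neighborFinset i \ S₂).card))
    (A : V → V → Prop) [DecidableRel A]
    (hsub : ∀ i j, A i j → G.Adj i j)
    (hrem : ∀ i : V, (univ.filter (fun j => G.Adj j i ∧ ¬ A j i)).card ≤ k) :
    dRobust A (r - k) := by
  intro S₁ S₂ h₁ h₂ hd
  rcases hG S₁ S₂ h₁ h₂ hd with ⟨i, hi, hc⟩ | ⟨i, hi, hc⟩
  · exact Or.inl ⟨i, hi, key_aux G r k A hrem S₁ i hc⟩
  · exact Or.inr ⟨i, hi, key_aux G r k A hrem S₂ i hc⟩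
end

section
/- Every r-robust directed graph with r ≥ 1 contains a rooted out-branching, i.e., there exists a vertex p from which every other vertex is reachable by a directed path. -/
open Finset

variable {V : Type*}

/-- Every r-robust directed graph with r ≥ 1 contains a rooted out-branching:
some vertex p can reach every other vertex by a directed path. -/
theorem stmt_5 [Fintype V] [DecidableEq V] [Nonempty V]
    (A : V → V → Prop) [DecidableRel A]
    (r : ℕ) (hr : 1 ≤ r) (h : dRobust A r) :
    ∃ p : V, ∀ v : V, Relation.ReflTransGen A p v := by
  classical
  set Anc : V → Finset V := fun v => univ.filter (fun u => Relation.ReflTransGen A u v)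
    with hAnc
  have memAnc : ∀ u v : V, u ∈ Anc v ↔ Relation.ReflTransGen A u v := by
    intro u v; simp [hAnc]
  obtain ⟨p, -, hp⟩ := Finset.exists_min_image (univ : Finset V)
    (fun v => (Anc v).card) univ_nonempty
  -- every ancestor of p is reachable from p
  have hreach : ∀ u ∈ Anc p, Relation.ReflTransGen A p u := by
    intro u hu
    have hsub : Anc u ⊆ Anc p := by
      intro w hw
      rw [memAnc] at *
      exact hw.trans hu
    have heq : Anc u = Anc p :=
      Finset.eq_of_subset_of_card_le hsub (hp u (mem_univ u))
    have : p ∈ Anc u := by rw [heq, memAnc]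
    rwa [memAnc] at this
  refine ⟨p, fun v => ?_⟩
  by_contra hv
  set T : Finset V := univ.filter (fun w => ¬ Relation.ReflTransGen A p w) with hT
  have hTne : T.Nonempty := ⟨v, by simp [hT, hv]⟩
  have hAne : (Anc p).Nonempty := ⟨p, by rw [memAnc]⟩
  have hdisj : Disjoint (Anc p) T := by
    rw [Finset.disjoint_left]
    intro u hu hu'
    have := hreach u hu
    simp [hT] at hu'
    exact hu' this
  rcases h (Anc p) T hAne hTne hdisj with ⟨i, hi, hcard⟩ | ⟨i, hi, hcard⟩
  · -- Anc p is in-closed, so the filtered set is empty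
    have : (univ.filter (fun j => A j i ∧ j ∉ Anc p)) = ∅ := by
      rw [Finset.filter_eq_empty_iff]
      rintro j - ⟨hji, hjn⟩
      apply hjn
      rw [memAnc] at hi ⊢
      exact Relation.ReflTransGen.head hji hi
    rw [this] at hcard
    simp at hcard
    omega
  · -- T has an in-neighbor outside T, contradiction with unreachability
    have hne : (univ.filter (fun j => A j i ∧ j ∉ T)).Nonempty := by
      rw [← Finset.card_pos]; omega
    obtain ⟨j, hj⟩ := hne
    simp only [mem_filter, mem_univ, true_and, hT, not_not] at hj
    obtain ⟨hji, hjr⟩ := hj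
    have : Relation.ReflTransGen A p i := hjr.tail hji
    simp [hT] at hi
    exact hi this
end

section
/- Let G be an (F+1)-robust undirected graph and let G' be the directed graph obtained by orienting each edge in both directions and removing at most F incoming edges at every vertex. Then G' contains a rooted out-branching: some vertex can reach all other vertices via directed paths in G'. -/
open Finset

variable {V : Type*}

/-- If G is (F+1)-robust and G' is obtained by orienting each edge in both directions and
removing at most F incoming edges at every vertex, then G' contains a rooted out-branching. -/
theorem stmt_6 [Fintype V] [DecidableEq V] [Nonempty V]
    (G : SimpleGraph V) [DecidableRel G.Adj] (F : ℕ)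
    (hG : ∀ S₁ S₂ : Finset V, S₁.Nonempty → S₂.Nonempty → Disjoint S₁ S₂ →
      (∃ i ∈ S₁, F + 1 ≤ (G.neighborFinset i \ S₁).card) ∨
      (∃ i ∈ S₂, F + 1 ≤ (G.neighborFinset i \ S₂).card))
    (A : V → V → Prop) [DecidableRel A]
    (hsub : ∀ i j, A i j → G.Adj i j)
    (hrem : ∀ i : V, (univ.filter (fun j => G.Adj j i ∧ ¬ A j i)).card ≤ F) :
    ∃ p : V, ∀ v : V, Relation.ReflTransGen A p v := by
  classical
  -- a set is closed if it has no incoming A-edges from outside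
  set Cl : Finset V → Prop := fun S => ∀ i ∈ S, ∀ j, A j i → j ∈ S with hCl
  -- two nonempty closed sets cannot be disjoint
  have key : ∀ S T : Finset V, S.Nonempty → T.Nonempty → Cl S → Cl T →
      ¬ Disjoint S T := by
    intro S T hS hT hCS hCT hdis
    have main : ∀ (U : Finset V), Cl U →
        ¬ (∃ i ∈ U, F + 1 ≤ (G.neighborFinset i \ U).card) := by
      intro U hCU ⟨i, hiU, hcard⟩
      have hsubset : G.neighborFinset i \ U ⊆
          univ.filter (fun j => G.Adj j i ∧ ¬ A j i) := by
        intro j hj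
        rw [Finset.mem_sdiff, SimpleGraph.mem_neighborFinset] at hj
        rw [Finset.mem_filter]
        refine ⟨Finset.mem_univ _, hj.1.symm, fun hA => hj.2 (hCU i hiU j hA)⟩
      have := (Finset.card_le_card hsubset).trans (hrem i)
      omega
    rcases hG S T hS hT hdis with h | h
    · exact main S hCS h
    · exact main T hCT h
  -- pick a nonempty closed set of minimal cardinality
  have hne : ((univ : Finset (Finset V)).filter
      (fun S => S.Nonempty ∧ Cl S)).Nonempty := by
    refine ⟨univ, ?_⟩
    simp only [Finset.mem_filter, Finset.mem_univ, true_and]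
    exact ⟨Finset.univ_nonempty, fun i _ j _ => Finset.mem_univ j⟩
  obtain ⟨S, hSmem, hSmin⟩ := Finset.exists_min_image _ (fun S => S.card) hne
  simp only [Finset.mem_filter, Finset.mem_univ, true_and] at hSmem
  obtain ⟨hSne, hSCl⟩ := hSmem
  obtain ⟨p, hp⟩ := hSne.exists_mem
  refine ⟨p, fun v => ?_⟩
  -- the ancestor set of v
  set C : Finset V := univ.filter (fun u => Relation.ReflTransGen A u v) with hCdef
  have hCne : C.Nonempty := ⟨v, by simp only [hCdef, Finset.mem_filter, Finset.mem_univ, true_and]; exact Relation.ReflTransGen.refl⟩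
  have hCCl : Cl C := by
    intro i hi j hA
    simp only [hCdef, Finset.mem_filter, Finset.mem_univ, true_and] at hi ⊢
    exact Relation.ReflTransGen.head hA hi
  -- S ∩ C is nonempty
  have hint : (S ∩ C).Nonempty := by
    by_contra h
    rw [Finset.not_nonempty_iff_eq_empty, ← Finset.disjoint_iff_inter_eq_empty] at h
    exact key S C hSne hCne hSCl hCCl h
  -- S ∩ C is closed, hence by minimality S ∩ C = S, so S ⊆ C
  have hintCl : Cl (S ∩ C) := by
    intro i hi j hA
    rw [Finset.mem_inter] at hi ⊢
    exact ⟨hSCl i hi.1 j hA, hCCl i hi.2 j hA⟩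
  have hle : S.card ≤ (S ∩ C).card := by
    apply hSmin
    simp only [Finset.mem_filter, Finset.mem_univ, true_and]
    exact ⟨hint, hintCl⟩
  have heq : S ∩ C = S :=
    Finset.eq_of_subset_of_card_le (Finset.inter_subset_left) hle
  have hpC : p ∈ C := by
    have : p ∈ S ∩ C := by rw [heq]; exact hp
    exact (Finset.mem_inter.mp this).2
  simpa [hCdef] using hpC
end

section
/- An r-robust graph is r-connected: removing any set of fewer than r vertices leaves the graph connected (assuming the graph has more than r vertices). -/
open Finset

variable {V : Type*}

/-- A nonempty set `S` is `r`-reachable if some vertex in `S` has at least `r`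
neighbors outside `S`. -/
def rReachable [Fintype V] [DecidableEq V] (G : SimpleGraph V) [DecidableRel G.Adj]
    (r : ℕ) (S : Finset V) : Prop :=
  ∃ i ∈ S, r ≤ (G.neighborFinset i \ S).card

/-- A graph is `r`-robust if for every pair of nonempty disjoint vertex subsets,
at least one of them is `r`-reachable. -/
def rRobust [Fintype V] [DecidableEq V] (G : SimpleGraph V) [DecidableRel G.Adj]
    (r : ℕ) : Prop :=
  ∀ S₁ S₂ : Finset V, S₁.Nonempty → S₂.Nonempty → Disjoint S₁ S₂ →
    rReachable G r S₁ ∨ rReachable G r S₂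

/-- An r-robust graph with more than r vertices is r-connected: removing fewer than r
vertices leaves the (induced) graph connected. -/
theorem stmt_8 [Fintype V] [DecidableEq V] (G : SimpleGraph V) [DecidableRel G.Adj]
    (r : ℕ) (h : rRobust G r) (hcard : r < Fintype.card V)
    (T : Finset V) (hT : T.card < r) :
    (G.induce {v : V | v ∉ T}).Connected := by
  classical
  -- the vertex type is nonempty
  have hne : ∃ v : V, v ∉ T := by
    by_contra hc
    push_neg at hc
    have : (Finset.univ : Finset V) ⊆ T := fun v _ => hc v
    have := Finset.card_le_card this
    simp only [Finset.card_univ] at this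
    omega
  obtain ⟨v₀, hv₀⟩ := hne
  haveI : Nonempty {v : V | v ∉ T} := ⟨⟨v₀, hv₀⟩⟩
  constructor
  · -- preconnected
    rintro ⟨u, hu⟩ ⟨v, hv⟩
    set H := G.induce {v : V | v ∉ T} with hH
    -- R w : w is outside T and reachable from u in the induced graph
    set R : V → Prop := fun w => ∃ hw : w ∉ T, H.Reachable ⟨u, hu⟩ ⟨w, hw⟩ with hR
    by_cases hRv : R v
    · obtain ⟨hw, hr⟩ := hRv
      exact hr
    · exfalso
      set S₁ : Finset V := Finset.univ.filter R with hS₁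
      set S₂ : Finset V := Finset.univ.filter (fun w => w ∉ T ∧ ¬ R w) with hS₂
      have hmem₁ : ∀ w, w ∈ S₁ ↔ R w := by
        intro w; simp [hS₁]
      have hmem₂ : ∀ w, w ∈ S₂ ↔ (w ∉ T ∧ ¬ R w) := by
        intro w; simp [hS₂]
      have hn₁ : S₁.Nonempty := ⟨u, (hmem₁ u).2 ⟨hu, SimpleGraph.Reachable.refl _⟩⟩
      have hn₂ : S₂.Nonempty := ⟨v, (hmem₂ v).2 ⟨hv, hRv⟩⟩
      have hdisj : Disjoint S₁ S₂ := by
        rw [Finset.disjoint_left]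
        intro a ha₁ ha₂
        exact ((hmem₂ a).1 ha₂).2 ((hmem₁ a).1 ha₁)
      -- any neighbor of a vertex of S₁, not in S₁, lies in T
      have key₁ : ∀ i ∈ S₁, G.neighborFinset i \ S₁ ⊆ T := by
        intro i hi x hx
        rw [Finset.mem_sdiff, SimpleGraph.mem_neighborFinset] at hx
        obtain ⟨hadj, hxS⟩ := hx
        by_contra hxT
        apply hxS
        obtain ⟨hiT, hir⟩ := (hmem₁ i).1 hi
        refine (hmem₁ x).2 ⟨hxT, hir.trans ?_⟩
        exact SimpleGraph.Adj.reachable (by exact hadj)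
      -- any neighbor of a vertex of S₂, not in S₂, lies in T
      have key₂ : ∀ j ∈ S₂, G.neighborFinset j \ S₂ ⊆ T := by
        intro j hj x hx
        rw [Finset.mem_sdiff, SimpleGraph.mem_neighborFinset] at hx
        obtain ⟨hadj, hxS⟩ := hx
        by_contra hxT
        obtain ⟨hjT, hjr⟩ := (hmem₂ j).1 hj
        by_cases hRx : R x
        · obtain ⟨hxT', hxr⟩ := hRx
          exact hjr ⟨hjT, hxr.trans (SimpleGraph.Adj.reachable
            (by exact hadj.symm : H.Adj ⟨x, hxT'⟩ ⟨j, hjT⟩))⟩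
        · exact hxS ((hmem₂ x).2 ⟨hxT, hRx⟩)
      rcases h S₁ S₂ hn₁ hn₂ hdisj with ⟨i, hi, hri⟩ | ⟨j, hj, hrj⟩
      · have := Finset.card_le_card (key₁ i hi)
        omega
      · have := Finset.card_le_card (key₂ j hj)
        omega
end

section
/- Let G be a (2F+1)-robust graph and B an F-local set. Then the induced subgraph on V \ B is connected (assuming V \ B is nonempty). -/
open Finset

variable {V : Type*}

/-- If G is (2F+1)-robust and B is F-local, then the induced subgraph on V \ B is
connected (assuming V \ B is nonempty). -/
theorem stmt_12 [Fintype V] [DecidableEq V] (G : SimpleGraph V) [DecidableRel G.Adj]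
    (F : ℕ) (hG : rRobust G (2 * F + 1))
    (B : Finset V)
    (hlocal : ∀ i ∉ B, ((G.neighborFinset i) ∩ B).card ≤ F)
    (hne : ({x : V | x ∉ B} : Set V).Nonempty) :
    (G.induce {x : V | x ∉ B}).Connected := by
  classical
  set s : Set V := {x : V | x ∉ B} with hs
  rw [SimpleGraph.connected_iff]
  refine ⟨fun u v => ?_, hne.to_subtype⟩
  by_contra hreach
  set S₁ : Finset V := Finset.univ.filter
    (fun w => ∃ hw : w ∈ s, (G.induce s).Reachable u ⟨w, hw⟩) with hS₁
  set S₂ : Finset V := Finset.univ.filter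
    (fun w => w ∈ s ∧ ∀ hw : w ∈ s, ¬ (G.induce s).Reachable u ⟨w, hw⟩) with hS₂
  have hmem₁ : ∀ w, w ∈ S₁ ↔ ∃ hw : w ∈ s, (G.induce s).Reachable u ⟨w, hw⟩ := by
    intro w; simp [hS₁]
  have hmem₂ : ∀ w, w ∈ S₂ ↔ w ∈ s ∧ ∀ hw : w ∈ s,
      ¬ (G.induce s).Reachable u ⟨w, hw⟩ := by
    intro w; simp [hS₂]
  have hu : (u : V) ∈ S₁ := (hmem₁ u).2 ⟨u.2, by rfl⟩
  have hv : (v : V) ∈ S₂ := (hmem₂ v).2 ⟨v.2, fun hw hr => hreach (by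
    convert hr using 2)⟩
  have hdisj : Disjoint S₁ S₂ := by
    rw [Finset.disjoint_left]
    intro w hw1 hw2
    obtain ⟨hw, hr⟩ := (hmem₁ w).1 hw1
    exact ((hmem₂ w).1 hw2).2 hw hr
  -- key: any vertex of S₁ (resp S₂) has all out-neighbors in B
  have key : ∀ (S : Finset V), (∀ w ∈ S, w ∈ s) →
      (∀ i ∈ S, ∀ j, G.Adj i j → j ∈ s → j ∈ S) →
      ¬ rReachable G (2 * F + 1) S := by
    intro S hSs hclosed ⟨i, hiS, hcard⟩
    have hsub : G.neighborFinset i \ S ⊆ G.neighborFinset i ∩ B := by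
      intro j hj
      rw [Finset.mem_sdiff] at hj
      rw [Finset.mem_inter]
      refine ⟨hj.1, ?_⟩
      by_contra hjB
      exact hj.2 (hclosed i hiS j (by simpa using hj.1) hjB)
    have := le_trans hcard (le_trans (Finset.card_le_card hsub)
      (hlocal i (hSs i hiS)))
    omega
  rcases hG S₁ S₂ ⟨u, hu⟩ ⟨v, hv⟩ hdisj with h | h
  · refine key S₁ (fun w hw => ((hmem₁ w).1 hw).1) ?_ h
    intro i hi j hij hjs
    obtain ⟨his, hr⟩ := (hmem₁ i).1 hi
    exact (hmem₁ j).2 ⟨hjs, hr.trans (SimpleGraph.Adj.reachable (by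
      simpa using hij))⟩
  · refine key S₂ (fun w hw => ((hmem₂ w).1 hw).1) ?_ h
    intro i hi j hij hjs
    obtain ⟨his, hnr⟩ := (hmem₂ i).1 hi
    refine (hmem₂ j).2 ⟨hjs, fun hw hr => hnr his ?_⟩
    exact hr.trans (SimpleGraph.Adj.reachable (by simpa using hij.symm))
end

section
/- Consider a graph obtained as follows: take a complete graph on 2r−1 vertices, then add additional vertices one at a time, each new vertex connected to at least r of the previously existing vertices. The resulting graph is r-robust (preferential-attachment construction). -/
open Finset

variable {V : Type*}

/-- Preferential-attachment construction: start from a complete graph on 2r−1 vertices and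
add vertices one at a time, each connected to at least r previously existing vertices.
The resulting graph is r-robust. -/
theorem stmt_14 (n r : ℕ) (hr : 1 ≤ r) (hn : 2 * r - 1 ≤ n)
    (G : SimpleGraph (Fin n)) [DecidableRel G.Adj]
    (hclique : ∀ i j : Fin n, (i : ℕ) < 2 * r - 1 → (j : ℕ) < 2 * r - 1 → i ≠ j → G.Adj i j)
    (hgrow : ∀ m : Fin n, 2 * r - 1 ≤ (m : ℕ) →
      r ≤ ((G.neighborFinset m).filter (fun j : Fin n => (j : ℕ) < (m : ℕ))).card) :
    rRobust G r := by
  classical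
  have aux : ∀ d : ℕ, ∀ S₁ S₂ : Finset (Fin n),
      (∀ x ∈ S₁ ∪ S₂, (x : ℕ) < 2 * r - 1 + d) → S₁.Nonempty → S₂.Nonempty → Disjoint S₁ S₂ →
      (∃ i ∈ S₁, r ≤ (((G.neighborFinset i).filter
          (fun j : Fin n => (j : ℕ) < 2 * r - 1 + d)) \ S₁).card) ∨
      (∃ i ∈ S₂, r ≤ (((G.neighborFinset i).filter
          (fun j : Fin n => (j : ℕ) < 2 * r - 1 + d)) \ S₂).card) := by
    intro d
    induction d with
    | zero =>
      intro S₁ S₂ hb h1 h2 hdisj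
      set C : Finset (Fin n) := (Finset.range (2 * r - 1)).attachFin
        (fun m hm => lt_of_lt_of_le (Finset.mem_range.mp hm) hn) with hCdef
      have hC : ∀ x : Fin n, x ∈ C ↔ (x : ℕ) < 2 * r - 1 := by
        intro x; simp [hCdef, Finset.mem_attachFin]
      have hCcard : C.card = 2 * r - 1 := by
        rw [hCdef, Finset.card_attachFin, Finset.card_range]
      have hsub1 : S₁ ⊆ C := fun x hx => (hC x).mpr (by
        have := hb x (Finset.mem_union_left _ hx); omega)
      have hsub2 : S₂ ⊆ C := fun x hx => (hC x).mpr (by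
        have := hb x (Finset.mem_union_right _ hx); omega)
      have hsum : S₁.card + S₂.card ≤ 2 * r - 1 := by
        rw [← Finset.card_union_of_disjoint hdisj]
        calc (S₁ ∪ S₂).card ≤ C.card := Finset.card_le_card (Finset.union_subset hsub1 hsub2)
          _ = 2 * r - 1 := hCcard
      have key0 : ∀ T : Finset (Fin n), T ⊆ C → T.Nonempty → T.card ≤ r - 1 →
          ∃ i ∈ T, r ≤ (((G.neighborFinset i).filter
            (fun j : Fin n => (j : ℕ) < 2 * r - 1 + 0)) \ T).card := by
        intro T hTC hTne hcard
        obtain ⟨i, hi⟩ := hTne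
        refine ⟨i, hi, ?_⟩
        have hsubset : C \ T ⊆ ((G.neighborFinset i).filter
            (fun j : Fin n => (j : ℕ) < 2 * r - 1 + 0)) \ T := by
          intro j hj
          rw [Finset.mem_sdiff] at hj
          refine Finset.mem_sdiff.mpr ⟨?_, hj.2⟩
          have hjC := (hC j).mp hj.1
          have hiC := (hC i).mp (hTC hi)
          have hne : j ≠ i := fun h => hj.2 (h ▸ hi)
          refine Finset.mem_filter.mpr ⟨?_, by omega⟩
          exact (SimpleGraph.mem_neighborFinset _ _ _).mpr (hclique i j hiC hjC hne.symm)
        calc r ≤ (C \ T).card := by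
              rw [Finset.card_sdiff_of_subset hTC, hCcard]; omega
          _ ≤ _ := Finset.card_le_card hsubset
      have hsmall : S₁.card ≤ r - 1 ∨ S₂.card ≤ r - 1 := by omega
      rcases hsmall with h | h
      · exact Or.inl (key0 S₁ hsub1 h1 h)
      · exact Or.inr (key0 S₂ hsub2 h2 h)
    | succ d ih =>
      intro S₁ S₂ hb h1 h2 hdisj
      by_cases hall : ∀ x ∈ S₁ ∪ S₂, (x : ℕ) < 2 * r - 1 + d
      · have hmono : ∀ (T : Finset (Fin n)) (i : Fin n),
            ((G.neighborFinset i).filter (fun j : Fin n => (j : ℕ) < 2 * r - 1 + d)) \ T ⊆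
            ((G.neighborFinset i).filter (fun j : Fin n => (j : ℕ) < 2 * r - 1 + (d + 1))) \ T := by
          intro T i j hj
          rw [Finset.mem_sdiff, Finset.mem_filter] at hj ⊢
          exact ⟨⟨hj.1.1, by omega⟩, hj.2⟩
        rcases ih S₁ S₂ hall h1 h2 hdisj with ⟨i, hi, hc⟩ | ⟨i, hi, hc⟩
        · exact Or.inl ⟨i, hi, hc.trans (Finset.card_le_card (hmono S₁ i))⟩
        · exact Or.inr ⟨i, hi, hc.trans (Finset.card_le_card (hmono S₂ i))⟩
      · push_neg at hall
        obtain ⟨m, hm, hmge⟩ := hall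
        have hmval : (m : ℕ) = 2 * r - 1 + d := by
          have := hb m hm; omega
        have key : ∀ T₁ T₂ : Finset (Fin n),
            (∀ x ∈ T₁ ∪ T₂, (x : ℕ) < 2 * r - 1 + (d + 1)) →
            T₁.Nonempty → T₂.Nonempty → Disjoint T₁ T₂ → m ∈ T₁ →
            (∃ i ∈ T₁, r ≤ (((G.neighborFinset i).filter
                (fun j : Fin n => (j : ℕ) < 2 * r - 1 + (d + 1))) \ T₁).card) ∨
            (∃ i ∈ T₂, r ≤ (((G.neighborFinset i).filter
                (fun j : Fin n => (j : ℕ) < 2 * r - 1 + (d + 1))) \ T₂).card) := by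
          intro T₁ T₂ hbT hT1 hT2 hdj hmem
          have hnbr : r ≤ ((G.neighborFinset m).filter
              (fun j : Fin n => (j : ℕ) < (m : ℕ))).card := hgrow m (by omega)
          by_cases hT : T₁ = {m}
          · left
            refine ⟨m, hmem, hnbr.trans (Finset.card_le_card ?_)⟩
            intro j hj
            rw [Finset.mem_filter] at hj
            rw [Finset.mem_sdiff, Finset.mem_filter, hT, Finset.mem_singleton]
            refine ⟨⟨hj.1, by omega⟩, ?_⟩
            intro h
            rw [h] at hj
            omega
          · have h1' : (T₁.erase m).Nonempty := by
              by_contra h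
              rw [Finset.not_nonempty_iff_eq_empty] at h
              apply hT
              apply Finset.Subset.antisymm
              · intro x hx
                rw [Finset.mem_singleton]
                by_contra hxm
                have : x ∈ T₁.erase m := Finset.mem_erase.mpr ⟨hxm, hx⟩
                rw [h] at this
                exact absurd this (Finset.notMem_empty x)
              · intro x hx
                rw [Finset.mem_singleton] at hx
                exact hx ▸ hmem
            have hb' : ∀ x ∈ T₁.erase m ∪ T₂, (x : ℕ) < 2 * r - 1 + d := by
              intro x hx
              have hxne : x ≠ m := by
                rcases Finset.mem_union.mp hx with hx' | hx'
                · exact (Finset.mem_erase.mp hx').1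
                · intro h; exact Finset.disjoint_left.mp hdj hmem (h ▸ hx')
              have hxval : (x : ℕ) ≠ (m : ℕ) := fun h => hxne (Fin.val_injective h)
              have hxlt : (x : ℕ) < 2 * r - 1 + (d + 1) := by
                rcases Finset.mem_union.mp hx with hx' | hx'
                · exact hbT x (Finset.mem_union_left _ (Finset.erase_subset _ _ hx'))
                · exact hbT x (Finset.mem_union_right _ hx')
              omega
            have hdj' : Disjoint (T₁.erase m) T₂ :=
              Disjoint.mono_left (Finset.erase_subset _ _) hdj
            rcases ih (T₁.erase m) T₂ hb' h1' hT2 hdj' with ⟨i, hi, hc⟩ | ⟨i, hi, hc⟩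
            · left
              refine ⟨i, (Finset.mem_erase.mp hi).2, hc.trans (Finset.card_le_card ?_)⟩
              intro j hj
              rw [Finset.mem_sdiff, Finset.mem_filter] at hj
              rw [Finset.mem_sdiff, Finset.mem_filter]
              refine ⟨⟨hj.1.1, by omega⟩, ?_⟩
              intro hjT₁
              apply hj.2
              refine Finset.mem_erase.mpr ⟨?_, hjT₁⟩
              intro h
              have := hj.1.2
              rw [h] at this
              omega
            · right
              refine ⟨i, hi, hc.trans (Finset.card_le_card ?_)⟩
              intro j hj
              rw [Finset.mem_sdiff, Finset.mem_filter] at hj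
              rw [Finset.mem_sdiff, Finset.mem_filter]
              exact ⟨⟨hj.1.1, by omega⟩, hj.2⟩
        rcases Finset.mem_union.mp hm with hm' | hm'
        · exact key S₁ S₂ hb h1 h2 hdisj hm'
        · have hb2 : ∀ x ∈ S₂ ∪ S₁, (x : ℕ) < 2 * r - 1 + (d + 1) := by
            intro x hx
            rw [Finset.union_comm] at hx
            exact hb x hx
          exact (key S₂ S₁ hb2 h2 h1 hdisj.symm hm').symm
  intro S₁ S₂ h1 h2 hdisj
  rcases aux n S₁ S₂ (fun x _ => by omega) h1 h2 hdisj with ⟨i, hi, hc⟩ | ⟨i, hi, hc⟩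
  · left
    refine ⟨i, hi, hc.trans (Finset.card_le_card ?_)⟩
    intro j hj
    rw [Finset.mem_sdiff, Finset.mem_filter] at hj
    exact Finset.mem_sdiff.mpr ⟨hj.1.1, hj.2⟩
  · right
    refine ⟨i, hi, hc.trans (Finset.card_le_card ?_)⟩
    intro j hj
    rw [Finset.mem_sdiff, Finset.mem_filter] at hj
    exact Finset.mem_sdiff.mpr ⟨hj.1.1, hj.2⟩
end

section
/- If a graph G is r-robust and G'' is obtained from G by adding a new vertex adjacent to at least r vertices of G, then G'' is r-robust. -/
open Finset

variable {V : Type*}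

lemma lift_reach [Fintype V] [DecidableEq V] (G : SimpleGraph V) [DecidableRel G.Adj]
    (r : ℕ) (G'' : SimpleGraph (Option V)) [DecidableRel G''.Adj]
    (hsome : ∀ a b : V, G''.Adj (some a) (some b) ↔ G.Adj a b)
    (S : Finset (Option V))
    (h : rReachable G r (univ.filter (fun a : V => some a ∈ S))) :
    rReachable G'' r S := by
  obtain ⟨i, hi, hcard⟩ := h
  refine ⟨some i, (mem_filter.mp hi).2, ?_⟩
  have hsub : (G.neighborFinset i \ univ.filter (fun a : V => some a ∈ S)).image some
      ⊆ G''.neighborFinset (some i) \ S := by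
    intro x hx
    simp only [mem_image, mem_sdiff, mem_filter, SimpleGraph.mem_neighborFinset,
      mem_univ, true_and] at hx ⊢
    obtain ⟨a, ⟨hadj, hns⟩, rfl⟩ := hx
    exact ⟨(hsome i a).mpr hadj, hns⟩
  calc r ≤ (G.neighborFinset i \ univ.filter (fun a : V => some a ∈ S)).card := hcard
    _ = ((G.neighborFinset i \ univ.filter (fun a : V => some a ∈ S)).image some).card :=
        (card_image_of_injective _ (Option.some_injective V)).symm
    _ ≤ _ := card_le_card hsub

/-- If G is r-robust and G'' is obtained from G by adding a new vertex adjacent to at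
least r vertices of G, then G'' is r-robust. -/
theorem stmt_15 [Fintype V] [DecidableEq V] (G : SimpleGraph V) [DecidableRel G.Adj]
    (r : ℕ) (hG : rRobust G r)
    (G'' : SimpleGraph (Option V)) [DecidableRel G''.Adj]
    (hsome : ∀ a b : V, G''.Adj (some a) (some b) ↔ G.Adj a b)
    (hnew : r ≤ (univ.filter (fun a : V => G''.Adj none (some a))).card) :
    rRobust G'' r := by
  classical
  intro S₁ S₂ h₁ h₂ hdisj
  set T₁ := univ.filter (fun a : V => some a ∈ S₁) with hT₁def
  set T₂ := univ.filter (fun a : V => some a ∈ S₂) with hT₂def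
  have hTdisj : Disjoint T₁ T₂ := by
    rw [disjoint_left]
    intro a ha1 ha2
    exact (disjoint_left.mp hdisj) (mem_filter.mp ha1).2 (mem_filter.mp ha2).2
  have hTne : ∀ (S : Finset (Option V)), S.Nonempty → none ∉ S →
      (univ.filter (fun a : V => some a ∈ S)).Nonempty := by
    intro S hS hn
    obtain ⟨x, hx⟩ := hS
    match x with
    | none => exact absurd hx hn
    | some a => exact ⟨a, mem_filter.mpr ⟨mem_univ a, hx⟩⟩
  have hnone_reach : ∀ (S : Finset (Option V)), none ∈ S →
      (univ.filter (fun a : V => some a ∈ S)) = ∅ → rReachable G'' r S := by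
    intro S hn hT
    refine ⟨none, hn, ?_⟩
    have hsub : (univ.filter (fun a : V => G''.Adj none (some a))).image some
        ⊆ G''.neighborFinset none \ S := by
      intro x hx
      simp only [mem_image, mem_sdiff, mem_filter, SimpleGraph.mem_neighborFinset,
        mem_univ, true_and] at hx ⊢
      obtain ⟨a, hadj, rfl⟩ := hx
      refine ⟨hadj, fun hmem => ?_⟩
      have : a ∈ (univ.filter (fun a : V => some a ∈ S)) :=
        mem_filter.mpr ⟨mem_univ a, hmem⟩
      simp [hT] at this
    calc r ≤ (univ.filter (fun a : V => G''.Adj none (some a))).card := hnew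
      _ = ((univ.filter (fun a : V => G''.Adj none (some a))).image some).card :=
          (card_image_of_injective _ (Option.some_injective V)).symm
      _ ≤ _ := card_le_card hsub
  by_cases hn1 : none ∈ S₁
  · have hn2 : none ∉ S₂ := fun h => (disjoint_left.mp hdisj) hn1 h
    rcases eq_empty_or_nonempty T₁ with hE | hNE
    · exact Or.inl (hnone_reach S₁ hn1 hE)
    · rcases hG T₁ T₂ hNE (hTne S₂ h₂ hn2) hTdisj with h | h
      · exact Or.inl (lift_reach G r G'' hsome S₁ h)
      · exact Or.inr (lift_reach G r G'' hsome S₂ h)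
  · by_cases hn2 : none ∈ S₂
    · rcases eq_empty_or_nonempty T₂ with hE | hNE
      · exact Or.inr (hnone_reach S₂ hn2 hE)
      · rcases hG T₁ T₂ (hTne S₁ h₁ hn1) hNE hTdisj with h | h
        · exact Or.inl (lift_reach G r G'' hsome S₁ h)
        · exact Or.inr (lift_reach G r G'' hsome S₂ h)
    · rcases hG T₁ T₂ (hTne S₁ h₁ hn1) (hTne S₂ h₂ hn2) hTdisj with h | h
      · exact Or.inl (lift_reach G r G'' hsome S₁ h)
      · exact Or.inr (lift_reach G r G'' hsome S₂ h)
end
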